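/- arXiv:1912.02571 — 4 statements merged into one kernel-verified Lean document; each statement's English description precedes it below -/
import Mathlib

section
/- For all j ∈ ℕ and s₀ ∈ [0,T) it holds (as an identity in [0,∞]) that ∫_{s₀}^T (s₁−s₀)^{−β} ϱ(s₀,s₁)^{−γ} ∫_{s₁}^T (s₂−s₁)^{−β} ϱ(s₁,s₂)^{−γ} ⋯ ∫_{s_{j−1}}^T (s_j−s_{j−1})^{−β} ϱ(s_{j−1},s_j)^{−γ} ds_j ⋯ ds₂ ds₁ = (T−s₀)^{j(1+γ−β)} · ∏_{i=0}^{j−1} ∫₀¹ (1−s)^{i(1+γ−β)} s^{−β} ρ(s)^{−γ} ds. -/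
open MeasureTheory
open scoped ENNReal

/-- The iterated integral
`∫_{s₀}^T (s₁−s₀)^{−β} ϱ(s₀,s₁)^{−γ} ⋯ ∫_{s_{j−1}}^T (s_j−s_{j−1})^{−β} ϱ(s_{j−1},s_j)^{−γ} ds_j ⋯ ds₁`,
interpreted as an iterated lower Lebesgue integral with values in `[0,∞]`. -/
noncomputable def iterInt (T β γ : ℝ) (ϱ : ℝ → ℝ → ℝ) : ℕ → ℝ → ℝ≥0∞
  | 0, _ => 1
  | j + 1, s₀ =>
      ∫⁻ s in Set.Ioo s₀ T,
        ENNReal.ofReal ((s - s₀) ^ (-β) * ϱ s₀ s ^ (-γ)) * iterInt T β γ ϱ j s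

/-!
Substituting `s = s₀ + (T - s₀) u` maps `(s₀, T)` onto `(0, 1)` with Jacobian `T - s₀`, and turns
the kernel into `(T - s₀)^(γ - β) u^(-β) ρ(u)^(-γ)`. By induction the inner integral equals
`(T - s)^(j(1+γ-β)) = (T - s₀)^(j(1+γ-β)) (1 - u)^(j(1+γ-β))` times a constant, so each level of
the iteration splits off one power `(T - s₀)^(1+γ-β)` and one integral over `(0, 1)`.
-/

open Set

theorem setLIntegral_Ioo_eq_lintegral_Ioo_zero_one {a b : ℝ} (hab : a < b) (g : ℝ → ℝ≥0∞) :
    ∫⁻ s in Ioo a b, g s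
      = ∫⁻ u in Ioo 0 1, ENNReal.ofReal (b - a) * g ((b - a) * u + a) := by
  have hc : 0 < b - a := sub_pos.2 hab
  have himage : (fun u => (b - a) * u + a) '' Ioo 0 1 = Ioo a b := by
    rw [image_affine_Ioo hc]; congr 1 <;> ring
  have hinj : InjOn (fun u => (b - a) * u + a) (Ioo 0 1) := fun x _ y _ h => by
    simpa [hc.ne'] using h
  rw [← himage, lintegral_image_eq_lintegral_abs_deriv_mul measurableSet_Ioo
    (fun u _ => ((hasDerivAt_id' u).const_mul (b - a) |>.add_const a).hasDerivWithinAt) hinj]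
  simp only [mul_one, abs_of_pos hc]

theorem rpow_kernel_rescale {c u r β γ e : ℝ} (hc : 0 < c) (hu₀ : 0 ≤ u) (hu₁ : u ≤ 1)
    (hr : 0 ≤ r) :
    c * ((c * u) ^ (-β) * (c⁻¹ * r) ^ (-γ)) * (c * (1 - u)) ^ e
      = c ^ (e + (1 + γ - β)) * ((1 - u) ^ e * u ^ (-β) * r ^ (-γ)) := by
  rw [Real.mul_rpow hc.le hu₀, Real.mul_rpow (inv_nonneg.2 hc.le) hr,
    Real.mul_rpow hc.le (sub_nonneg.2 hu₁), Real.inv_rpow hc.le, ← Real.rpow_neg hc.le,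
    neg_neg, Real.rpow_add hc, Real.rpow_sub hc, Real.rpow_add hc, Real.rpow_neg hc.le,
    Real.rpow_one]
  field_simp

theorem iterInt_eq {T β γ : ℝ} {ρ : ℝ → ℝ} (hρmeas : Measurable ρ)
    (hρpos : ∀ r ∈ Ioo (0 : ℝ) 1, 0 < ρ r) {ϱ : ℝ → ℝ → ℝ}
    (hϱ : ∀ t ∈ Ico (0 : ℝ) T, ∀ s ∈ Ioc t T, ϱ t s = (T - t)⁻¹ * ρ ((s - t) / (T - t)))
    (j : ℕ) : ∀ s₀ ∈ Ico (0 : ℝ) T,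
    iterInt T β γ ϱ j s₀
      = ENNReal.ofReal ((T - s₀) ^ ((j : ℝ) * (1 + γ - β)))
        * ∏ i ∈ Finset.range j,
            ∫⁻ s in Ioo (0 : ℝ) 1,
              ENNReal.ofReal ((1 - s) ^ ((i : ℝ) * (1 + γ - β)) * s ^ (-β) * ρ s ^ (-γ)) := by
  induction j with
  | zero => simp [iterInt]
  | succ j ih =>
    rintro s₀ ⟨hs₀, hs₀T⟩
    set E := 1 + γ - β
    set c := T - s₀
    have hc : 0 < c := sub_pos.2 hs₀T
    set f : ℝ → ℝ≥0∞ := fun u ↦ ENNReal.ofReal ((1 - u) ^ ((j : ℝ) * E) * u ^ (-β) * ρ u ^ (-γ))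
    have hf : Measurable f := by fun_prop
    set P := ∏ i ∈ Finset.range j,
      ∫⁻ s in Ioo (0 : ℝ) 1, ENNReal.ofReal ((1 - s) ^ ((i : ℝ) * E) * s ^ (-β) * ρ s ^ (-γ))
    have hpoint : ∀ u ∈ Ioo (0 : ℝ) 1,
        ENNReal.ofReal c * (ENNReal.ofReal ((c * u + s₀ - s₀) ^ (-β) * ϱ s₀ (c * u + s₀) ^ (-γ))
          * iterInt T β γ ϱ j (c * u + s₀))
        = ENNReal.ofReal (c ^ (((j : ℝ) + 1) * E)) * f u * P := by
      rintro u ⟨hu₀, hu₁⟩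
      have hρu := hρpos u ⟨hu₀, hu₁⟩
      have hs : c * u + s₀ ∈ Ioo s₀ T := ⟨by nlinarith, by nlinarith⟩
      have hϱu : ϱ s₀ (c * u + s₀) = c⁻¹ * ρ u := by
        rw [hϱ s₀ ⟨hs₀, hs₀T⟩ _ (Ioo_subset_Ioc_self hs), add_sub_cancel_right,
          mul_div_cancel_left₀ _ hc.ne']
      have hTs : T - (c * u + s₀) = c * (1 - u) := by ring
      rw [ih _ ⟨by linarith [hs.1], hs.2⟩, hϱu, hTs, add_sub_cancel_right, ← mul_assoc,
        ← mul_assoc, ← ENNReal.ofReal_mul hc.le, ← ENNReal.ofReal_mul (by positivity),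
        rpow_kernel_rescale hc hu₀.le hu₁.le hρu.le, ENNReal.ofReal_mul (by positivity), add_one_mul]
    calc iterInt T β γ ϱ (j + 1) s₀
        = ∫⁻ u in Ioo (0 : ℝ) 1, ENNReal.ofReal c
            * (ENNReal.ofReal ((c * u + s₀ - s₀) ^ (-β) * ϱ s₀ (c * u + s₀) ^ (-γ))
              * iterInt T β γ ϱ j (c * u + s₀)) :=
          setLIntegral_Ioo_eq_lintegral_Ioo_zero_one hs₀T _
      _ = ∫⁻ u in Ioo (0 : ℝ) 1, ENNReal.ofReal (c ^ (((j : ℝ) + 1) * E)) * f u * P :=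
          setLIntegral_congr_fun measurableSet_Ioo hpoint
      _ = ENNReal.ofReal (c ^ (((j : ℝ) + 1) * E)) * (∫⁻ u in Ioo (0 : ℝ) 1, f u) * P := by
          rw [lintegral_mul_const _ (hf.const_mul _), lintegral_const_mul _ hf]
      _ = _ := by rw [Finset.prod_range_succ]; push_cast; ring

theorem stmt4_general (T β γ : ℝ)
    (ρ : ℝ → ℝ) (hρmeas : Measurable ρ) (hρpos : ∀ r ∈ Set.Ioo (0 : ℝ) 1, 0 < ρ r)
    (ϱ : ℝ → ℝ → ℝ)
    (hϱ : ∀ t ∈ Set.Ico (0 : ℝ) T, ∀ s ∈ Set.Ioc t T,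
      ϱ t s = (T - t)⁻¹ * ρ ((s - t) / (T - t)))
    (j : ℕ) (s₀ : ℝ) (hs₀ : s₀ ∈ Set.Ico (0 : ℝ) T) :
    iterInt T β γ ϱ j s₀
      = ENNReal.ofReal ((T - s₀) ^ ((j : ℝ) * (1 + γ - β)))
        * ∏ i ∈ Finset.range j,
            ∫⁻ s in Set.Ioo (0 : ℝ) 1,
              ENNReal.ofReal ((1 - s) ^ ((i : ℝ) * (1 + γ - β)) * s ^ (-β) * ρ s ^ (-γ)) :=
  iterInt_eq hρmeas hρpos hϱ j s₀ hs₀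

/-- Lemma 2.1: let `T, β, γ ∈ (0,∞)`, let `ρ : (0,1) → (0,∞)` be measurable, and let
`ϱ : [0,T]² → (0,∞)` satisfy `ϱ(t,s) = (T−t)⁻¹ ρ((s−t)/(T−t))` for `t ∈ [0,T)`, `s ∈ (t,T]`.
Then for all `j ∈ ℕ` (i.e. `1 ≤ j`) and `s₀ ∈ [0,T)` the iterated integral equals
`(T−s₀)^{j(1+γ−β)} ∏_{i=0}^{j−1} ∫₀¹ (1−s)^{i(1+γ−β)} s^{−β} ρ(s)^{−γ} ds`
(as an identity in `[0,∞]`). -/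
theorem stmt4 (T β γ : ℝ) (hT : 0 < T) (hβ : 0 < β) (hγ : 0 < γ)
    (ρ : ℝ → ℝ) (hρmeas : Measurable ρ) (hρpos : ∀ r ∈ Set.Ioo (0 : ℝ) 1, 0 < ρ r)
    (ϱ : ℝ → ℝ → ℝ)
    (hϱpos : ∀ t ∈ Set.Icc (0 : ℝ) T, ∀ s ∈ Set.Icc (0 : ℝ) T, 0 < ϱ t s)
    (hϱ : ∀ t ∈ Set.Ico (0 : ℝ) T, ∀ s ∈ Set.Ioc t T,
      ϱ t s = (T - t)⁻¹ * ρ ((s - t) / (T - t)))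
    (j : ℕ) (hj : 1 ≤ j) (s₀ : ℝ) (hs₀ : s₀ ∈ Set.Ico (0 : ℝ) T) :
    iterInt T β γ ϱ j s₀
      = ENNReal.ofReal ((T - s₀) ^ ((j : ℝ) * (1 + γ - β)))
        * ∏ i ∈ Finset.range j,
            ∫⁻ s in Set.Ioo (0 : ℝ) 1,
              ENNReal.ofReal ((1 - s) ^ ((i : ℝ) * (1 + γ - β)) * s ^ (-β) * ρ s ^ (-γ)) :=
  stmt4_general T β γ ρ hρmeas hρpos ϱ hϱ j s₀ hs₀
end

section
/- For all j ∈ ℕ and s₀ ∈ [0,T) it holds that ∫_{s₀}^T (s₁−s₀)^{−β} ϱ(s₀,s₁)^{−γ} ∫_{s₁}^T (s₂−s₁)^{−β} ϱ(s₁,s₂)^{−γ} ⋯ ∫_{s_{j−1}}^T (s_j−s_{j−1})^{−β} ϱ(s_{j−1},s_j)^{−γ} ds_j ⋯ ds₂ ds₁ = [ (T−s₀)^{1+γ−β}·Γ(αγ−β+1)/(1−α)^γ ]^{j} · ∏_{i=0}^{j−1} Γ(i(1+γ−β)+1)/Γ(αγ−β+i(1+γ−β)+2), where Γ denotes the Gamma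 function. -/
/-! Since `ϱ(t,s)^{-γ} = (1-α)^{-γ} (T-t)^{(1-α)γ} (s-t)^{αγ}`, every layer of the iterated
integral is a Beta integral. By induction the inner `j`-fold integral is `c_j (T-s)^{j(1+γ-β)}`, and
integrating it against `(s-s₀)^{αγ-β}` over `(s₀,T)` gives `(T-s₀)^{(j+1)(1+γ-β)}` times
`B(αγ-β+1, j(1+γ-β)+1) = Γ(αγ-β+1) Γ(j(1+γ-β)+1) / Γ(αγ-β+j(1+γ-β)+2)`. -/

open MeasureTheory
open scoped ENNReal

open ProbabilityTheory Set

theorem lintegral_Ioo_rpow_mul_one_sub_rpow {p q : ℝ} (hp : 0 < p) (hq : 0 < q) :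
    ∫⁻ x in Ioo 0 1, ENNReal.ofReal (x ^ (p - 1) * (1 - x) ^ (q - 1))
      = ENNReal.ofReal (beta p q) := by
  have hB := beta_pos hp hq
  have hpdf := lintegral_betaPDF_eq_one hp hq
  rw [lintegral_betaPDF] at hpdf
  calc ∫⁻ x in Ioo 0 1, ENNReal.ofReal (x ^ (p - 1) * (1 - x) ^ (q - 1))
      = ∫⁻ x in Ioo 0 1, ENNReal.ofReal (beta p q)
          * ENNReal.ofReal (1 / beta p q * x ^ (p - 1) * (1 - x) ^ (q - 1)) := by
        refine lintegral_congr fun x => ?_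
        rw [← ENNReal.ofReal_mul hB.le]
        field_simp
    _ = ENNReal.ofReal (beta p q) := by
        rw [lintegral_const_mul' _ _ ENNReal.ofReal_ne_top, hpdf, mul_one]

theorem lintegral_Ioo_sub_rpow_mul_sub_rpow {a b p q : ℝ} (hab : a < b) (hp : 0 < p)
    (hq : 0 < q) :
    ∫⁻ s in Ioo a b, ENNReal.ofReal ((s - a) ^ (p - 1) * (b - s) ^ (q - 1))
      = ENNReal.ofReal ((b - a) ^ (p + q - 1) * beta p q) := by
  have hba : 0 < b - a := sub_pos.2 hab
  have himage : ((b - a) * · + a) '' Ioo 0 1 = Ioo a b := by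
    rw [image_affine_Ioo hba]; ring_nf
  rw [← himage, lintegral_image_eq_lintegral_abs_deriv_mul (f := ((b - a) * · + a))
      measurableSet_Ioo
      (fun x _ => (((hasDerivAt_id x).const_mul (b - a)).add_const a).hasDerivWithinAt)
      ((add_left_injective a).comp (mul_right_injective₀ hba.ne')).injOn,
    ENNReal.ofReal_mul (Real.rpow_nonneg hba.le _), ← lintegral_Ioo_rpow_mul_one_sub_rpow hp hq,
    ← lintegral_const_mul' _ _ ENNReal.ofReal_ne_top]
  refine setLIntegral_congr_fun measurableSet_Ioo fun x ⟨hx0, hx1⟩ => ?_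
  have hleft : (b - a) * x + a - a = (b - a) * x := by ring
  have hright : b - ((b - a) * x + a) = (b - a) * (1 - x) := by ring
  rw [← ENNReal.ofReal_mul (abs_nonneg _), ← ENNReal.ofReal_mul (Real.rpow_nonneg hba.le _),
    hleft, hright, mul_one, abs_of_pos hba, Real.mul_rpow hba.le hx0.le,
    Real.mul_rpow hba.le (sub_nonneg.2 hx1.le), show p + q - 1 = 1 + (p - 1) + (q - 1) by ring,
    Real.rpow_add hba, Real.rpow_add hba, Real.rpow_one]
  ring_nf

theorem sub_rpow_neg_mul_rpow_neg_eq {α T β γ : ℝ} {ρ : ℝ → ℝ} {ϱ : ℝ → ℝ → ℝ} (hα : α < 1)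
    (hρ : ∀ r ∈ Ioo (0 : ℝ) 1, ρ r = (1 - α) / r ^ α)
    (hϱ : ∀ t ∈ Ico (0 : ℝ) T, ∀ s ∈ Ioc t T, ϱ t s = (T - t)⁻¹ * ρ ((s - t) / (T - t)))
    {t s : ℝ} (ht : t ∈ Ico 0 T) (hs : s ∈ Ioo t T) :
    (s - t) ^ (-β) * ϱ t s ^ (-γ)
      = ((1 - α) ^ γ)⁻¹ * (T - t) ^ (γ - α * γ) * (s - t) ^ (α * γ - β) := by
  have hTt : 0 < T - t := sub_pos.2 ht.2
  have hst : 0 < s - t := sub_pos.2 hs.1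
  have hr : (s - t) / (T - t) ∈ Ioo (0 : ℝ) 1 :=
    ⟨div_pos hst hTt, (div_lt_one hTt).2 (by linarith [hs.2])⟩
  have hϱts : ϱ t s = (1 - α) * ((s - t) ^ (-α) * (T - t) ^ (α - 1)) := by
    rw [hϱ t ht s ⟨hs.1, hs.2.le⟩, hρ _ hr, Real.div_rpow hst.le hTt.le, Real.rpow_neg hst.le,
      Real.rpow_sub hTt, Real.rpow_one]
    field_simp
  rw [hϱts, Real.mul_rpow (sub_nonneg.2 hα.le) (by positivity),
    Real.mul_rpow (by positivity) (by positivity), ← Real.rpow_mul hst.le,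
    ← Real.rpow_mul hTt.le, show α * γ - β = -β + -α * -γ by ring, Real.rpow_add hst,
    Real.rpow_neg (sub_nonneg.2 hα.le)]
  ring_nf

noncomputable def iterIntCoeff (α γ β : ℝ) (j : ℕ) : ℝ :=
  (Real.Gamma (α * γ - β + 1) / (1 - α) ^ γ) ^ j
    * ∏ i ∈ Finset.range j, Real.Gamma ((i : ℝ) * (1 + γ - β) + 1)
        / Real.Gamma (α * γ - β + (i : ℝ) * (1 + γ - β) + 2)

theorem iterIntCoeff_succ (α γ β : ℝ) (j : ℕ) :
    iterIntCoeff α γ β (j + 1) = ((1 - α) ^ γ)⁻¹ * iterIntCoeff α γ β j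
      * beta (α * γ - β + 1) (j * (1 + γ - β) + 1) := by
  have hsum : α * γ - β + 1 + (j * (1 + γ - β) + 1) = α * γ - β + j * (1 + γ - β) + 2 := by ring
  rw [iterIntCoeff, iterIntCoeff, Finset.prod_range_succ, pow_succ, beta, hsum]
  ring

theorem iterIntCoeff_nonneg {α γ β : ℝ} (hα : α < 1) (hp : 0 < α * γ - β + 1)
    (he : 0 ≤ 1 + γ - β) (j : ℕ) : 0 ≤ iterIntCoeff α γ β j := by
  have hΓ : ∀ x : ℝ, 0 < x → 0 ≤ Real.Gamma x := fun x hx => (Real.Gamma_pos_of_pos hx).le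
  refine mul_nonneg (pow_nonneg (div_nonneg (hΓ _ hp) (by bound)) _)
    (Finset.prod_nonneg fun i _ => ?_)
  have hie : 0 ≤ (i : ℝ) * (1 + γ - β) := mul_nonneg i.cast_nonneg he
  exact div_nonneg (hΓ _ (by linarith)) (hΓ _ (by linarith))

theorem iterInt_eq_iterIntCoeff_mul {α T γ β : ℝ} {ρ : ℝ → ℝ} {ϱ : ℝ → ℝ → ℝ} (hα : α < 1)
    (hγ : 0 < γ) (hβ : β < α * γ + 1) (hρ : ∀ r ∈ Ioo (0 : ℝ) 1, ρ r = (1 - α) / r ^ α)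
    (hϱ : ∀ t ∈ Ico (0 : ℝ) T, ∀ s ∈ Ioc t T, ϱ t s = (T - t)⁻¹ * ρ ((s - t) / (T - t)))
    (j : ℕ) {s₀ : ℝ} (hs₀ : s₀ ∈ Ico 0 T) :
    iterInt T β γ ϱ j s₀
      = ENNReal.ofReal (iterIntCoeff α γ β j * (T - s₀) ^ (j * (1 + γ - β))) := by
  have hp : 0 < α * γ - β + 1 := by linarith
  have he : 0 ≤ 1 + γ - β := by nlinarith
  induction j generalizing s₀ with
  | zero => simp [iterInt, iterIntCoeff]
  | succ j ih =>
    have hTs₀ : 0 < T - s₀ := sub_pos.2 hs₀.2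
    have hq : 0 < j * (1 + γ - β) + 1 := by positivity
    set C := ((1 - α) ^ γ)⁻¹ * (T - s₀) ^ (γ - α * γ) * iterIntCoeff α γ β j
    have hC : 0 ≤ C := by
      have := iterIntCoeff_nonneg hα hp he j
      positivity
    have hintegrand : ∀ s ∈ Ioo s₀ T,
        ENNReal.ofReal ((s - s₀) ^ (-β) * ϱ s₀ s ^ (-γ)) * iterInt T β γ ϱ j s
          = ENNReal.ofReal C * ENNReal.ofReal ((s - s₀) ^ (α * γ - β + 1 - 1)
              * (T - s) ^ (j * (1 + γ - β) + 1 - 1)) := by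
      intro s hs
      have hss₀ : 0 < s - s₀ := sub_pos.2 hs.1
      rw [ih ⟨hs₀.1.trans hs.1.le, hs.2⟩, sub_rpow_neg_mul_rpow_neg_eq hα hρ hϱ hs₀ hs,
        ← ENNReal.ofReal_mul hC, ← ENNReal.ofReal_mul (by bound)]
      congr 1
      simp only [C, add_sub_cancel_right]
      ring
    rw [iterInt, setLIntegral_congr_fun measurableSet_Ioo hintegrand,
      lintegral_const_mul' _ _ ENNReal.ofReal_ne_top,
      lintegral_Ioo_sub_rpow_mul_sub_rpow hs₀.2 hp hq, ← ENNReal.ofReal_mul hC,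
      iterIntCoeff_succ]
    congr 1
    have hexp : (↑(j + 1) : ℝ) * (1 + γ - β)
        = γ - α * γ + (α * γ - β + 1 + (j * (1 + γ - β) + 1) - 1) := by push_cast; ring
    rw [hexp, Real.rpow_add hTs₀]
    ring

theorem stmt5_general (α T γ β : ℝ) (hα : α ∈ Set.Ioo (0 : ℝ) 1) (hγ : 0 < γ)
    (hβ : β ∈ Set.Ioo (0 : ℝ) (α * γ + 1))
    (ρ : ℝ → ℝ) (hρ : ∀ r ∈ Set.Ioo (0 : ℝ) 1, ρ r = (1 - α) / r ^ α)
    (ϱ : ℝ → ℝ → ℝ)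
    (hϱ : ∀ t ∈ Set.Ico (0 : ℝ) T, ∀ s ∈ Set.Ioc t T,
      ϱ t s = (T - t)⁻¹ * ρ ((s - t) / (T - t)))
    (j : ℕ) (s₀ : ℝ) (hs₀ : s₀ ∈ Set.Ico (0 : ℝ) T) :
    iterInt T β γ ϱ j s₀
      = ENNReal.ofReal
          (((T - s₀) ^ (1 + γ - β) * Real.Gamma (α * γ - β + 1) / (1 - α) ^ γ) ^ j
            * ∏ i ∈ Finset.range j,
                Real.Gamma ((i : ℝ) * (1 + γ - β) + 1)
                  / Real.Gamma (α * γ - β + (i : ℝ) * (1 + γ - β) + 2)) := by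
  rw [iterInt_eq_iterIntCoeff_mul hα.2 hγ hβ.2 hρ hϱ j hs₀, iterIntCoeff]
  congr 1
  rw [mul_comm (j : ℝ), Real.rpow_mul (sub_nonneg.2 hs₀.2.le), Real.rpow_natCast, mul_div_assoc,
    mul_pow]
  ring

/-- Lemma 2.2: let `α ∈ (0,1)`, `T, γ ∈ (0,∞)`, `β ∈ (0, αγ+1)`, let `ρ(r) = (1−α) r^{−α}` and
`ϱ(t,s) = (T−t)⁻¹ ρ((s−t)/(T−t))`.  Then for all `j ∈ ℕ` (i.e. `1 ≤ j`) and `s₀ ∈ [0,T)` the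
iterated integral equals
`[(T−s₀)^{1+γ−β} Γ(αγ−β+1)/(1−α)^γ]^j ∏_{i=0}^{j−1} Γ(i(1+γ−β)+1)/Γ(αγ−β+i(1+γ−β)+2)`. -/
theorem stmt5 (α T γ β : ℝ) (hα : α ∈ Set.Ioo (0 : ℝ) 1) (hT : 0 < T) (hγ : 0 < γ)
    (hβ : β ∈ Set.Ioo (0 : ℝ) (α * γ + 1))
    (ρ : ℝ → ℝ) (hρ : ∀ r ∈ Set.Ioo (0 : ℝ) 1, ρ r = (1 - α) / r ^ α)
    (ϱ : ℝ → ℝ → ℝ)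
    (hϱ : ∀ t ∈ Set.Ico (0 : ℝ) T, ∀ s ∈ Set.Ioc t T,
      ϱ t s = (T - t)⁻¹ * ρ ((s - t) / (T - t)))
    (j : ℕ) (hj : 1 ≤ j) (s₀ : ℝ) (hs₀ : s₀ ∈ Set.Ico (0 : ℝ) T) :
    iterInt T β γ ϱ j s₀
      = ENNReal.ofReal
          (((T - s₀) ^ (1 + γ - β) * Real.Gamma (α * γ - β + 1) / (1 - α) ^ γ) ^ j
            * ∏ i ∈ Finset.range j,
                Real.Gamma ((i : ℝ) * (1 + γ - β) + 1)
                  / Real.Gamma (α * γ - β + (i : ℝ) * (1 + γ - β) + 2)) :=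
  stmt5_general α T γ β hα hγ hβ ρ hρ ϱ hϱ j s₀ hs₀
end

section
/- For all j ∈ ℕ it holds that ∏_{i=0}^{j−1} Γ(i(1+γ−β)+1)/Γ(αγ−β+i(1+γ−β)+2) ≤ [ e^{1+γ−β}·((1+γ−β)(j−1)+1) ]^{(β−αγ)(αγ−β+1)/(1+γ−β)} · [ Γ(1/(1+γ−β)) / ((1+γ−β)^{j}·Γ(j + 1/(1+γ−β))) ]^{αγ−β+1}, where Γ denotes the Gamma function. -/
/-! Write `c = 1 + γ - β`, `d = αγ - β + 1 ∈ [0, 1]` and `xᵢ = ic + 1`. Log-convexity of `Γ` gives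
Wendel's inequality `Γ(x)/Γ(x + d) ≤ (x + d)^(1-d)/x = (1 + d/x)^(1-d) x^(-d)`. The product of the
`xᵢ` telescopes to `c^j Γ(j + 1/c)/Γ(1/c)`, and `1 + t ≤ eᵗ` together with the harmonic-type bound
`∑ 1/xᵢ ≤ 1 + log(c(j-1) + 1)/c` controls the product of the `1 + d/xᵢ`. -/

open Finset

namespace Real

theorem Gamma_add_one_le_rpow_mul_Gamma_add {x d : ℝ} (hxd : 0 < x + d) (hd0 : 0 ≤ d)
    (hd1 : d ≤ 1) : Gamma (x + 1) ≤ (x + d) ^ (1 - d) * Gamma (x + d) := by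
  have hΓ : 0 < Gamma (x + d) := Gamma_pos_of_pos hxd
  have hconv := convexOn_log_Gamma.2 (Set.mem_Ioi.2 hxd)
    (Set.mem_Ioi.2 (by linarith : 0 < x + d + 1)) hd0 (sub_nonneg.2 hd1) (add_sub_cancel d 1)
  rw [show d • (x + d) + (1 - d) • (x + d + 1) = x + 1 by simp only [smul_eq_mul]; ring] at hconv
  simp only [Function.comp_apply, smul_eq_mul, Gamma_add_one hxd.ne',
    log_mul hxd.ne' hΓ.ne'] at hconv
  rw [← log_le_log_iff (Gamma_pos_of_pos (by linarith)) (by positivity),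
    log_mul (by positivity) hΓ.ne', log_rpow hxd]
  linarith

theorem Gamma_div_Gamma_add_le {x d : ℝ} (hx : 0 < x) (hd0 : 0 ≤ d) (hd1 : d ≤ 1) :
    Gamma x / Gamma (x + d) ≤ (x + d) ^ (1 - d) / x := by
  rw [div_le_div_iff₀ (Gamma_pos_of_pos (by linarith)) hx, mul_comm, ← Gamma_add_one hx.ne']
  exact Gamma_add_one_le_rpow_mul_Gamma_add (by linarith) hd0 hd1

theorem pow_mul_Gamma_natCast_add_one_div {c : ℝ} (hc : 0 < c) (j : ℕ) :
    c ^ j * Gamma (j + 1 / c) = Gamma (1 / c) * ∏ i ∈ range j, ((i : ℝ) * c + 1) := by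
  induction j with
  | zero => simp
  | succ n ih =>
    have hpos : 0 < (n : ℝ) + 1 / c := by positivity
    rw [Nat.cast_succ, add_right_comm, Gamma_add_one hpos.ne', prod_range_succ, ← mul_assoc (Gamma _), ← ih]
    field_simp
    ring

theorem sum_range_one_div_mul_add_one_le {c : ℝ} (hc : 0 < c) {j : ℕ} (hj : 1 ≤ j) :
    ∑ i ∈ range j, 1 / ((i : ℝ) * c + 1) ≤ 1 + log (c * (j - 1) + 1) / c := by
  induction j, hj using Nat.le_induction with
  | base => simp
  | succ n hn ih =>
    have hn1 : (1 : ℝ) ≤ n := by exact_mod_cast hn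
    have hlo : 0 < c * (n - 1) + 1 := by nlinarith
    have hhi : 0 < c * n + 1 := by positivity
    have hstep := one_sub_inv_le_log_of_pos (div_pos hhi hlo)
    rw [log_div hhi.ne' hlo.ne', inv_div,
      show 1 - (c * (n - 1) + 1) / (c * n + 1) = c * (1 / (n * c + 1)) by field_simp; ring]
      at hstep
    have hterm : 1 / ((n : ℝ) * c + 1) ≤ log (c * n + 1) / c - log (c * (n - 1) + 1) / c := by
      rw [← sub_div, le_div_iff₀ hc]
      linarith
    rw [sum_range_succ, Nat.cast_succ, add_sub_cancel_right]
    linarith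

theorem prod_range_one_add_div_le {c d : ℝ} (hc : 0 < c) (hd : 0 ≤ d) {j : ℕ} (hj : 1 ≤ j) :
    ∏ i ∈ range j, (1 + d / ((i : ℝ) * c + 1)) ≤ (exp c * (c * (j - 1) + 1)) ^ (d / c) := by
  have hj1 : (1 : ℝ) ≤ j := by exact_mod_cast hj
  have hlog : 0 < c * (j - 1) + 1 := by nlinarith
  calc ∏ i ∈ range j, (1 + d / ((i : ℝ) * c + 1))
      ≤ ∏ i ∈ range j, exp (d * (1 / ((i : ℝ) * c + 1))) :=
        prod_le_prod (fun i _ => by positivity) fun i _ => by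
          rw [add_comm, mul_one_div]; exact add_one_le_exp _
    _ = exp (d * ∑ i ∈ range j, 1 / ((i : ℝ) * c + 1)) := by rw [mul_sum, exp_sum]
    _ ≤ exp (d * (1 + log (c * (j - 1) + 1) / c)) := by
        gcongr; exact sum_range_one_div_mul_add_one_le hc hj
    _ = (exp c * (c * (j - 1) + 1)) ^ (d / c) := by
        rw [rpow_def_of_pos (by positivity), log_mul (exp_ne_zero c) hlog.ne', log_exp]
        field_simp

theorem prod_Gamma_div_Gamma_add_le {c d : ℝ} (hc : 0 < c) (hd0 : 0 ≤ d) (hd1 : d ≤ 1) {j : ℕ}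
    (hj : 1 ≤ j) :
    ∏ i ∈ range j, Gamma ((i : ℝ) * c + 1) / Gamma ((i : ℝ) * c + 1 + d)
      ≤ (exp c * (c * (j - 1) + 1)) ^ ((1 - d) * d / c)
        * (Gamma (1 / c) / (c ^ j * Gamma (j + 1 / c))) ^ d := by
  have hx : ∀ i : ℕ, 0 < (i : ℝ) * c + 1 := fun i => by positivity
  have hfactor : ∀ {y : ℝ}, 0 < y →
      Gamma y / Gamma (y + d) ≤ (1 + d / y) ^ (1 - d) * y⁻¹ ^ d := fun {y} hy =>
    calc Gamma y / Gamma (y + d) ≤ (y + d) ^ (1 - d) / y := Gamma_div_Gamma_add_le hy hd0 hd1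
      _ = (1 + d / y) ^ (1 - d) * y⁻¹ ^ d := by
        rw [show y + d = y * (1 + d / y) by field_simp, mul_rpow hy.le (by positivity),
          rpow_sub hy, rpow_one, inv_rpow hy.le]
        field_simp
  have hP : Gamma (1 / c) / (c ^ j * Gamma (j + 1 / c)) = (∏ i ∈ range j, ((i : ℝ) * c + 1))⁻¹ := by
    rw [pow_mul_Gamma_natCast_add_one_div hc,
      div_mul_cancel_left₀ (Gamma_pos_of_pos (by positivity)).ne']
  calc ∏ i ∈ range j, Gamma ((i : ℝ) * c + 1) / Gamma ((i : ℝ) * c + 1 + d)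
      ≤ ∏ i ∈ range j, ((1 + d / ((i : ℝ) * c + 1)) ^ (1 - d) * ((i : ℝ) * c + 1)⁻¹ ^ d) :=
        prod_le_prod (fun i _ => div_nonneg (Gamma_nonneg_of_nonneg (hx i).le)
          (Gamma_nonneg_of_nonneg (by linarith [hx i]))) fun i _ => hfactor (hx i)
    _ = (∏ i ∈ range j, (1 + d / ((i : ℝ) * c + 1))) ^ (1 - d)
          * (∏ i ∈ range j, ((i : ℝ) * c + 1))⁻¹ ^ d := by
        rw [prod_mul_distrib, finsetProd_rpow _ _ (fun i _ => by positivity),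
          finsetProd_rpow _ _ (fun i _ => by positivity), prod_inv_distrib]
    _ ≤ ((exp c * (c * (j - 1) + 1)) ^ (d / c)) ^ (1 - d)
          * (∏ i ∈ range j, ((i : ℝ) * c + 1))⁻¹ ^ d := by
        gcongr
        exact prod_range_one_add_div_le hc hd0 hj
    _ = _ := by
        have hj1 : (1 : ℝ) ≤ j := by exact_mod_cast hj
        rw [hP, ← rpow_mul (by positivity), div_mul_eq_mul_div, mul_comm d]

end Real

/-- Let `α ∈ (0,1)`, `γ ∈ (0,∞)`, `β ∈ [αγ, αγ+1]`.  Then for all `j ∈ ℕ` (i.e. `1 ≤ j`),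
`∏_{i=0}^{j−1} Γ(i(1+γ−β)+1)/Γ(αγ−β+i(1+γ−β)+2)
  ≤ [e^{1+γ−β}((1+γ−β)(j−1)+1)]^{(β−αγ)(αγ−β+1)/(1+γ−β)}
    · [Γ(1/(1+γ−β))/((1+γ−β)^j Γ(j+1/(1+γ−β)))]^{αγ−β+1}`. -/
theorem stmt8 (α γ β : ℝ) (hα : α ∈ Set.Ioo (0 : ℝ) 1) (hγ : 0 < γ)
    (hβ : β ∈ Set.Icc (α * γ) (α * γ + 1)) (j : ℕ) (hj : 1 ≤ j) :
    ∏ i ∈ Finset.range j,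
        Real.Gamma ((i : ℝ) * (1 + γ - β) + 1) / Real.Gamma (α * γ - β + (i : ℝ) * (1 + γ - β) + 2)
      ≤ (Real.exp (1 + γ - β) * ((1 + γ - β) * ((j : ℝ) - 1) + 1))
            ^ ((β - α * γ) * (α * γ - β + 1) / (1 + γ - β))
        * (Real.Gamma (1 / (1 + γ - β))
            / ((1 + γ - β) ^ j * Real.Gamma ((j : ℝ) + 1 / (1 + γ - β))))
            ^ (α * γ - β + 1) := by
  obtain ⟨-, hα1⟩ := hα
  obtain ⟨hβ1, hβ2⟩ := hβ
  have hc : 0 < 1 + γ - β := by nlinarith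
  have hden : ∀ i : ℕ, α * γ - β + (i : ℝ) * (1 + γ - β) + 2
      = (i : ℝ) * (1 + γ - β) + 1 + (α * γ - β + 1) := fun i => by ring
  simp_rw [hden, show β - α * γ = 1 - (α * γ - β + 1) by ring]
  exact Real.prod_Gamma_div_Gamma_add_le hc (by linarith) (by linarith) hj
end

section
/- The following two assertions hold: (a) for all t ∈ [0,T] and x = (x_1,…,x_d), 𝔵 = (𝔵_1,…,𝔵_d) ∈ ℝ^d: |u(t,x) − u(t,𝔵)| ≤ e^{L₀(T−t)} · Σ_{j=1}^{d} (K_j + (T−t)·𝔏_j)·|x_j − 𝔵_j|; and (b) for all t ∈ (0,T), x ∈ ℝ^d, i ∈ {1,…,d}: |(∂/∂x_i)u(t,x)| ≤ e^{L₀(T−t)}·(K_i + (T−t)·𝔏_i). -/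
open MeasureTheory

/-- Partial derivative of `φ : ℝ^d → ℝ` at `x` in the `i`-th coordinate direction. -/
noncomputable def pderiv (d : ℕ) (φ : (Fin d → ℝ) → ℝ) (x : Fin d → ℝ) (i : Fin d) : ℝ :=
  fderiv ℝ φ x (Pi.single i 1)

/-- Laplacian of `φ : ℝ^d → ℝ` at `x` (sum of the second coordinate partial derivatives). -/
noncomputable def laplacian (d : ℕ) (φ : (Fin d → ℝ) → ℝ) (x : Fin d → ℝ) : ℝ :=
  ∑ i : Fin d, pderiv d (fun y => pderiv d φ y i) x i

/-!
Fix an increment `h`. The weighted difference `e^{L₀(s-T)} (u(s, y+h) - u(s, y))` is compared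
with `Σ_j (K_j + (T-s) 𝔏_j) |h_j|` by a maximum principle. After subtracting the barrier
`ε (e^{c(T-s)} (1 + Σ_j y_j²)^{n+2} + (T - s))`, where `n ≥ η` makes the barrier dominate the
polynomial growth of `u`, the difference attains its maximum on `[0,T] × ℝ^d`. At `s = T` this
maximum is nonpositive by the Lipschitz bound on `g`. At `s < T`, the first- and second-order
conditions in `y` and the one-sided condition in `s`, inserted into the PDE at `y + h` and `y` and
into the Lipschitz bound on `f`, force the time derivative to be at least `ε > 0`: the weight
`e^{L₀(s-T)}` absorbs the `L₀ |u(s, y+h) - u(s, y)|` term and `c` absorbs the barrier's Laplacian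
and gradient. Letting `ε → 0` gives (a), and (b) follows from (a) along coordinate lines.
-/

open Set Filter Topology

theorem IsLocalMax.deriv_deriv_nonpos {ψ : ℝ → ℝ} {a : ℝ} (h : IsLocalMax ψ a)
    (hc : ContinuousAt ψ a) : deriv (deriv ψ) a ≤ 0 := by
  by_contra! hpos
  have hconst : ψ =ᶠ[𝓝 a] fun _ => ψ a :=
    ((isLocalMin_of_deriv_deriv_pos hpos h.deriv_eq_zero hc).and h).mono
      fun _ hx => le_antisymm hx.2 hx.1
  have : deriv ψ =ᶠ[𝓝 a] fun _ => 0 := by simpa using hconst.deriv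
  simp [this.deriv_eq] at hpos

theorem HasDerivWithinAt.nonpos_of_isMaxOn_Icc {ψ : ℝ → ℝ} {D a b t : ℝ}
    (hD : HasDerivWithinAt ψ D (Icc a b) t) (hmax : IsMaxOn ψ (Icc a b) t) (ht : t ∈ Ico a b) :
    D ≤ 0 := by
  have hseg : segment ℝ t (t + (b - t)) ⊆ Icc a b := by
    rw [add_sub_cancel, segment_eq_Icc (by linarith [ht.2])]
    exact Icc_subset_Icc ht.1 le_rfl
  have := hmax.localize.hasFDerivWithinAt_nonpos hD
    (mem_posTangentConeAt_of_segment_subset hseg)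
  rw [ContinuousLinearMap.toSpanSingleton_apply, smul_eq_mul] at this
  nlinarith [ht.2]

lemma le_of_forall_pos_le_add_mul {a b c : ℝ} (h : ∀ ε > 0, a ≤ b + ε * c) : a ≤ b := by
  refine le_of_forall_pos_le_add fun δ hδ => ?_
  have hc : 0 < |c| + 1 := by positivity
  calc a ≤ b + δ / (|c| + 1) * c := h _ (by positivity)
    _ ≤ b + δ / (|c| + 1) * (|c| + 1) := by gcongr; linarith [le_abs_self c]
    _ = b + δ := by field_simp

theorem IsCompact.exists_isMaxOn_prod_of_nonpos {X E : Type*} [TopologicalSpace X] [T2Space X]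
    [NormedAddCommGroup E] [ProperSpace E] {K : Set X} (hK : IsCompact K) {Φ : X × E → ℝ}
    (hΦ : ContinuousOn Φ (K ×ˢ univ)) {R : ℝ} (hout : ∀ s ∈ K, ∀ y, R < ‖y‖ → Φ (s, y) ≤ 0)
    {p₀ : X × E} (hp₀ : p₀ ∈ K ×ˢ univ) (hpos : 0 < Φ p₀) :
    ∃ p ∈ K ×ˢ univ, IsMaxOn Φ (K ×ˢ univ) p := by
  refine hΦ.exists_isMaxOn' (hK.isClosed.prod isClosed_univ) hp₀ ?_
  refine mem_inf_of_inter (hK.prod (isCompact_closedBall 0 R)).compl_mem_cocompact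
    (mem_principal_self _) fun p ⟨hpK, hp⟩ => ?_
  have hR : R < ‖p.2‖ := by
    by_contra! hle
    exact hpK ⟨hp.1, mem_closedBall_zero_iff.2 hle⟩
  exact (hout p.1 hp.1 p.2 hR).trans hpos.le

section PartialDerivatives

variable {d : ℕ}

lemma differentiable_pderiv {F : (Fin d → ℝ) → ℝ} (hF : ContDiff ℝ 2 F) (i : Fin d) :
    Differentiable ℝ fun y => pderiv d F y i :=
  ((hF.fderiv_right (m := 1) (by norm_num)).clm_apply contDiff_const).differentiable (by norm_num)

lemma hasDerivAt_pderiv_line {F : (Fin d → ℝ) → ℝ} (hF : Differentiable ℝ F)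
    (x : Fin d → ℝ) (i : Fin d) (τ : ℝ) :
    HasDerivAt (fun σ : ℝ => F (x + σ • Pi.single i 1))
      (pderiv d F (x + τ • Pi.single i 1) i) τ := by
  have hline : HasDerivAt (fun σ : ℝ => x + σ • (Pi.single i 1 : Fin d → ℝ)) (Pi.single i 1) τ := by
    simpa using ((hasDerivAt_id τ).smul_const (Pi.single i (1 : ℝ) : Fin d → ℝ)).const_add x
  exact (hF _).hasFDerivAt.comp_hasDerivAt τ hline

theorem IsLocalMax.pderiv_pderiv_nonpos {F : (Fin d → ℝ) → ℝ} {x : Fin d → ℝ}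
    (h : IsLocalMax F x) (hF : ContDiff ℝ 2 F) (i : Fin d) :
    pderiv d (fun y => pderiv d F y i) x i ≤ 0 := by
  have hderiv : deriv (fun τ : ℝ => F (x + τ • Pi.single i 1)) =
      fun τ => pderiv d F (x + τ • Pi.single i 1) i :=
    funext fun τ => (hasDerivAt_pderiv_line (hF.differentiable (by norm_num)) x i τ).deriv
  have hmax : IsLocalMax (fun τ : ℝ => F (x + τ • Pi.single i 1)) 0 :=
    IsLocalMax.comp_continuous (by simpa using h) (by fun_prop)
  have := hmax.deriv_deriv_nonpos (hF.continuous.comp (by fun_prop)).continuousAt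
  rwa [hderiv, (hasDerivAt_pderiv_line (differentiable_pderiv hF i) x i 0).deriv, zero_smul,
    add_zero] at this

lemma pderiv_mul_sub_comp_add_sub_mul {F G : (Fin d → ℝ) → ℝ} (hF : Differentiable ℝ F)
    (hG : Differentiable ℝ G) (a b : ℝ) (h x : Fin d → ℝ) (i : Fin d) :
    pderiv d (fun y => a * (F (y + h) - F y) - b * G y) x i
      = a * (pderiv d F (x + h) i - pderiv d F x i) - b * pderiv d G x i := by
  have hFh : HasFDerivAt (fun y => F (y + h)) (fderiv ℝ F (x + h)) x :=
    (hF _).hasFDerivAt.comp x ((hasFDerivAt_id x).add_const h)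
  have hW : HasFDerivAt (fun y => a * (F (y + h) - F y) - b * G y)
      (a • (fderiv ℝ F (x + h) - fderiv ℝ F x) - b • fderiv ℝ G x) x :=
    ((hFh.sub (hF x).hasFDerivAt).const_mul a).sub ((hG x).hasFDerivAt.const_mul b)
  simp [pderiv, hW.fderiv]

theorem IsLocalMax.pderiv_eq_and_laplacian_le {F G : (Fin d → ℝ) → ℝ} (hF : ContDiff ℝ 2 F)
    (hG : ContDiff ℝ 2 G) {a b : ℝ} {h x : Fin d → ℝ}
    (hmax : IsLocalMax (fun y => a * (F (y + h) - F y) - b * G y) x) :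
    (∀ i, a * (pderiv d F (x + h) i - pderiv d F x i) = b * pderiv d G x i) ∧
      a * (laplacian d F (x + h) - laplacian d F x) ≤ b * laplacian d G x := by
  have hW : ContDiff ℝ 2 fun y => a * (F (y + h) - F y) - b * G y := by
    have := hF.comp (contDiff_id.add (contDiff_const (c := h)))
    exact (contDiff_const.mul (this.sub hF)).sub (contDiff_const.mul hG)
  have hF1 := hF.differentiable (by norm_num)
  have hG1 := hG.differentiable (by norm_num)
  refine ⟨fun i => ?_, ?_⟩
  · have : pderiv d (fun y => a * (F (y + h) - F y) - b * G y) x i = 0 := by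
      simp [pderiv, hmax.fderiv_eq_zero]
    rw [pderiv_mul_sub_comp_add_sub_mul hF1 hG1] at this
    linarith
  · have hsecond : ∀ i, a * (pderiv d (fun y => pderiv d F y i) (x + h) i
        - pderiv d (fun y => pderiv d F y i) x i)
          ≤ b * pderiv d (fun y => pderiv d G y i) x i := fun i => by
      have := hmax.pderiv_pderiv_nonpos hW i
      simp only [pderiv_mul_sub_comp_add_sub_mul hF1 hG1] at this
      rw [pderiv_mul_sub_comp_add_sub_mul (differentiable_pderiv hF i)
        (differentiable_pderiv hG i)] at this
      linarith
    simp only [laplacian, ← Finset.sum_sub_distrib, Finset.mul_sum]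
    exact Finset.sum_le_sum fun i _ => hsecond i

lemma sum_mul_abs_add_smul_single_sub (C x : Fin d → ℝ) (i : Fin d) (τ : ℝ) :
    ∑ j, C j * |(x + τ • (Pi.single i 1 : Fin d → ℝ)) j - x j| = C i * |τ| := by
  rw [Finset.sum_eq_single i (fun j _ hj => by simp [hj]) (by simp)]
  simp

lemma nonneg_of_abs_sub_le_sum_mul_abs {F : (Fin d → ℝ) → ℝ} {C : Fin d → ℝ}
    (hF : ∀ x 𝔵 : Fin d → ℝ, |F x - F 𝔵| ≤ ∑ i, C i * |x i - 𝔵 i|) (i : Fin d) : 0 ≤ C i := by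
  have := (abs_nonneg _).trans (hF (0 + (1 : ℝ) • Pi.single i 1) 0)
  rwa [sum_mul_abs_add_smul_single_sub, abs_one, mul_one] at this

lemma abs_pderiv_le_of_abs_sub_le {F : (Fin d → ℝ) → ℝ} (hF : Differentiable ℝ F)
    {x : Fin d → ℝ} {i : Fin d} {C : ℝ}
    (hC : ∀ τ : ℝ, |F (x + τ • Pi.single i 1) - F x| ≤ C * |τ|) : |pderiv d F x i| ≤ C := by
  have hC₀ : 0 ≤ C := by simpa using (abs_nonneg _).trans (hC 1)
  simpa using (hasDerivAt_pderiv_line hF x i 0).le_of_lip' hC₀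
    (Eventually.of_forall fun τ => by simpa using hC τ)

end PartialDerivatives

section Penalty

variable {d : ℕ}

def penalty (n : ℕ) (y : Fin d → ℝ) : ℝ := (1 + ∑ j, y j ^ 2) ^ (n + 2)

lemma penalty_nonneg (n : ℕ) (y : Fin d → ℝ) : 0 ≤ penalty n y := by
  unfold penalty; positivity

lemma contDiff_penalty (n : ℕ) : ContDiff ℝ 2 (penalty (d := d) n) := by
  unfold penalty; fun_prop

lemma one_le_one_add_sum_sq (y : Fin d → ℝ) : 1 ≤ 1 + ∑ j, y j ^ 2 := by
  have := Finset.sum_nonneg fun j (_ : j ∈ Finset.univ) => sq_nonneg (y j)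
  linarith

lemma sq_le_one_add_sum_sq (y : Fin d → ℝ) (i : Fin d) : y i ^ 2 ≤ 1 + ∑ j, y j ^ 2 := by
  have := Finset.single_le_sum (fun j _ => sq_nonneg (y j)) (Finset.mem_univ i)
  linarith

lemma abs_le_one_add_sum_sq (y : Fin d → ℝ) (i : Fin d) : |y i| ≤ 1 + ∑ j, y j ^ 2 := by
  have := Finset.single_le_sum (fun j _ => sq_nonneg (y j)) (Finset.mem_univ i)
  nlinarith [sq_abs (y i), sq_nonneg (|y i| - 1)]

lemma hasFDerivAt_one_add_sum_sq (y : Fin d → ℝ) :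
    HasFDerivAt (fun y : Fin d → ℝ => 1 + ∑ j, y j ^ 2)
      (∑ j, (2 * y j) • ContinuousLinearMap.proj (R := ℝ) (φ := fun _ : Fin d => ℝ) j) y := by
  refine (HasFDerivAt.fun_sum fun j _ => ?_).const_add 1
  simpa [mul_comm] using (hasFDerivAt_apply (𝕜 := ℝ) j y).pow 2

lemma pderiv_penalty (n : ℕ) (y : Fin d → ℝ) (i : Fin d) :
    pderiv d (penalty n) y i = 2 * (n + 2) * y i * (1 + ∑ j, y j ^ 2) ^ (n + 1) := by
  unfold penalty pderiv
  rw [((hasFDerivAt_one_add_sum_sq y).pow (n + 2)).fderiv]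
  simp [Pi.single_apply]
  ring

lemma pderiv_pderiv_penalty (n : ℕ) (y : Fin d → ℝ) (i : Fin d) :
    pderiv d (fun y => pderiv d (penalty n) y i) y i
      = 2 * (n + 2) * ((1 + ∑ j, y j ^ 2) ^ (n + 1)
        + 2 * (n + 1) * y i ^ 2 * (1 + ∑ j, y j ^ 2) ^ n) := by
  simp only [pderiv_penalty]
  unfold pderiv
  rw [(((hasFDerivAt_apply (𝕜 := ℝ) i y).const_mul (2 * (n + 2 : ℝ))).fun_mul
    ((hasFDerivAt_one_add_sum_sq y).pow (n + 1))).fderiv]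
  simp [Pi.single_apply]
  ring

lemma abs_pderiv_penalty_le (n : ℕ) (y : Fin d → ℝ) (i : Fin d) :
    |pderiv d (penalty n) y i| ≤ 4 * (n + 2) ^ 2 * penalty n y := by
  rw [pderiv_penalty, penalty]
  set Q := 1 + ∑ j, y j ^ 2
  have hQ : 1 ≤ Q := one_le_one_add_sum_sq y
  have hQn : 0 ≤ Q ^ (n + 1) := by positivity
  have hyi : |y i| * Q ^ (n + 1) ≤ Q ^ (n + 2) := by
    rw [pow_succ' Q (n + 1)]
    exact mul_le_mul_of_nonneg_right (abs_le_one_add_sum_sq y i) hQn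
  rw [abs_mul, abs_mul, abs_of_pos (by positivity : (0 : ℝ) < 2 * (n + 2)), abs_of_nonneg hQn]
  calc 2 * (n + 2) * |y i| * Q ^ (n + 1) ≤ 2 * (n + 2) * Q ^ (n + 2) := by
        rw [mul_assoc]; gcongr
    _ ≤ 4 * (n + 2) ^ 2 * Q ^ (n + 2) := by
        have : 2 * ((n : ℝ) + 2) ≤ 4 * (n + 2) ^ 2 := by nlinarith [n.cast_nonneg (α := ℝ)]
        gcongr

lemma pderiv_pderiv_penalty_le (n : ℕ) (y : Fin d → ℝ) (i : Fin d) :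
    pderiv d (fun y => pderiv d (penalty n) y i) y i ≤ 4 * (n + 2) ^ 2 * penalty n y := by
  rw [pderiv_pderiv_penalty, penalty]
  set Q := 1 + ∑ j, y j ^ 2
  have hQ : 1 ≤ Q := one_le_one_add_sum_sq y
  have h1 : Q ^ (n + 1) ≤ Q ^ (n + 2) := pow_le_pow_right₀ hQ (by omega)
  have h2 : y i ^ 2 * Q ^ n ≤ Q ^ (n + 2) := by
    calc y i ^ 2 * Q ^ n ≤ Q * Q ^ n := by gcongr; exact sq_le_one_add_sum_sq y i
      _ = Q ^ (n + 1) := (pow_succ' Q n).symm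
      _ ≤ Q ^ (n + 2) := h1
  have hP : 0 ≤ Q ^ (n + 2) := by positivity
  calc 2 * (n + 2) * (Q ^ (n + 1) + 2 * (n + 1) * y i ^ 2 * Q ^ n)
      = 2 * (n + 2) * Q ^ (n + 1) + 4 * (n + 2) * (n + 1) * (y i ^ 2 * Q ^ n) := by ring
    _ ≤ 2 * (n + 2) * Q ^ (n + 2) + 4 * (n + 2) * (n + 1) * Q ^ (n + 2) := by gcongr
    _ ≤ 4 * (n + 2) ^ 2 * Q ^ (n + 2) := by nlinarith

lemma one_add_sum_abs_rpow_le (η : ℝ) (z : Fin d → ℝ) :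
    (1 + ∑ i, |z i|) ^ η ≤ ((d + 1) * (1 + ∑ j, z j ^ 2)) ^ ⌈η⌉₊ := by
  have hS : 1 + ∑ i, |z i| ≤ (d + 1) * (1 + ∑ j, z j ^ 2) := by
    have := Finset.sum_le_sum fun i (_ : i ∈ Finset.univ) => abs_le_one_add_sum_sq z i
    have := one_le_one_add_sum_sq z
    simp only [Finset.sum_const, Finset.card_univ, Fintype.card_fin, nsmul_eq_mul] at *
    nlinarith
  have h1 : 1 ≤ 1 + ∑ i, |z i| := le_add_of_nonneg_right (by positivity)
  calc (1 + ∑ i, |z i|) ^ η ≤ (1 + ∑ i, |z i|) ^ (⌈η⌉₊ : ℝ) :=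
        Real.rpow_le_rpow_of_exponent_le h1 (Nat.le_ceil η)
    _ = (1 + ∑ i, |z i|) ^ ⌈η⌉₊ := Real.rpow_natCast _ _
    _ ≤ _ := pow_le_pow_left₀ (by linarith) hS _

lemma one_add_sum_sq_add_le (y h : Fin d → ℝ) :
    1 + ∑ j, (y + h) j ^ 2 ≤ 2 * (1 + ∑ j, h j ^ 2) * (1 + ∑ j, y j ^ 2) := by
  have hsum : ∑ j, (y + h) j ^ 2 ≤ ∑ j, (2 * y j ^ 2 + 2 * h j ^ 2) :=
    Finset.sum_le_sum fun j _ => by simp only [Pi.add_apply]; nlinarith [sq_nonneg (y j - h j)]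
  rw [Finset.sum_add_distrib, ← Finset.mul_sum, ← Finset.mul_sum] at hsum
  have hy := Finset.sum_nonneg fun j (_ : j ∈ Finset.univ) => sq_nonneg (y j)
  have hh := Finset.sum_nonneg fun j (_ : j ∈ Finset.univ) => sq_nonneg (h j)
  nlinarith [mul_nonneg hy hh]

lemma norm_le_one_add_sum_sq (y : Fin d → ℝ) : ‖y‖ ≤ 1 + ∑ j, y j ^ 2 :=
  (pi_norm_le_iff_of_nonneg (by linarith [one_le_one_add_sum_sq y])).2 fun i => by
    rw [Real.norm_eq_abs]; exact abs_le_one_add_sum_sq y i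

theorem exists_sub_le_penalty_of_growth {v : ℝ → (Fin d → ℝ) → ℝ} {S : Set ℝ} {η : ℝ}
    (hv : ∀ t ∈ S, ∀ x, |v t x| ≤ η * (1 + ∑ i, |x i|) ^ η) (h : Fin d → ℝ) {ε : ℝ}
    (hε : 0 < ε) :
    ∃ R, ∀ t ∈ S, ∀ y, R < ‖y‖ → v t (y + h) - v t y ≤ ε * penalty ⌈η⌉₊ y := by
  set n := ⌈η⌉₊
  set C := 2 * η * (2 * (d + 1) * (1 + ∑ j, h j ^ 2)) ^ n
  refine ⟨C / ε, fun t ht y hy => ?_⟩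
  have hη : 0 ≤ η := by simpa using (abs_nonneg _).trans (hv t ht 0)
  set Q := 1 + ∑ j, y j ^ 2
  have hQ : 1 ≤ Q := one_le_one_add_sum_sq y
  have hbound : ∀ z, 1 + ∑ j, z j ^ 2 ≤ 2 * (1 + ∑ j, h j ^ 2) * Q → |v t z| ≤ C / 2 * Q ^ n :=
    fun z hz => calc
      |v t z| ≤ η * ((d + 1) * (1 + ∑ j, z j ^ 2)) ^ n :=
        (hv t ht z).trans (mul_le_mul_of_nonneg_left (one_add_sum_abs_rpow_le η z) hη)
      _ ≤ η * ((d + 1) * (2 * (1 + ∑ j, h j ^ 2) * Q)) ^ n := by gcongr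
      _ = C / 2 * Q ^ n := by
        rw [show (d + 1) * (2 * (1 + ∑ j, h j ^ 2) * Q) = 2 * (d + 1) * (1 + ∑ j, h j ^ 2) * Q
          by ring, mul_pow]
        ring
  have hy' : 1 + ∑ j, y j ^ 2 ≤ 2 * (1 + ∑ j, h j ^ 2) * Q := by
    have := one_le_one_add_sum_sq h; nlinarith
  have hC : C ≤ ε * Q ^ 2 := by
    have hCy := (div_lt_iff₀' hε).1 hy
    have hyQ : ‖y‖ ≤ Q ^ 2 := (norm_le_one_add_sum_sq y).trans (by nlinarith)
    nlinarith
  calc v t (y + h) - v t y ≤ |v t (y + h)| + |v t y| := by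
        linarith [le_abs_self (v t (y + h)), neg_abs_le (v t y)]
    _ ≤ C * Q ^ n := by
        linarith [hbound _ (one_add_sum_sq_add_le y h), hbound y hy']
    _ ≤ ε * Q ^ 2 * Q ^ n := by gcongr
    _ = ε * penalty n y := by rw [penalty, pow_add]; ring

end Penalty

section PenalizedIncrement

variable {d : ℕ} {u : ℝ → (Fin d → ℝ) → ℝ} {h : Fin d → ℝ} {L₀ T a b ε c κ s : ℝ}
  {φ : (Fin d → ℝ) → ℝ} {f : ℝ → (Fin d → ℝ) → ℝ → (Fin d → ℝ) → ℝ} {g : (Fin d → ℝ) → ℝ}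
  {L 𝔏 K : Fin d → ℝ} {x : Fin d → ℝ}

variable (u h L₀ T a b ε c φ) in
noncomputable def penalizedIncrement (p : ℝ × (Fin d → ℝ)) : ℝ :=
  Real.exp (L₀ * (p.1 - T)) * (u p.1 (p.2 + h) - u p.1 p.2) - (a + (T - p.1) * b)
    - ε * (Real.exp (c * (T - p.1)) * φ p.2 + (T - p.1))

lemma hasDerivWithinAt_penalizedIncrement {S : Set ℝ} {U₁ U₂ : ℝ}
    (h₁ : HasDerivWithinAt (fun s => u s (x + h)) U₁ S s)
    (h₂ : HasDerivWithinAt (fun s => u s x) U₂ S s) :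
    HasDerivWithinAt (fun s => penalizedIncrement u h L₀ T a b ε c φ (s, x))
      (Real.exp (L₀ * (s - T)) * (L₀ * (u s (x + h) - u s x) + (U₁ - U₂))
        + b + ε * (c * Real.exp (c * (T - s)) * φ x + 1)) S s := by
  have hA : HasDerivWithinAt (fun s => Real.exp (L₀ * (s - T)))
      (Real.exp (L₀ * (s - T)) * L₀) S s :=
    ((((hasDerivWithinAt_id s S).sub_const T).const_mul L₀).exp).congr_deriv
      (by simp only [id]; ring)
  have hE : HasDerivWithinAt (fun s => Real.exp (c * (T - s)))
      (Real.exp (c * (T - s)) * -c) S s :=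
    ((((hasDerivWithinAt_id s S).const_sub T).const_mul c).exp).congr_deriv
      (by simp only [id]; ring)
  have hB : HasDerivWithinAt (fun s => a + (T - s) * b) (-b) S s :=
    ((((hasDerivWithinAt_id s S).const_sub T).mul_const b).const_add a).congr_deriv (by ring)
  have hP : HasDerivWithinAt (fun s => ε * (Real.exp (c * (T - s)) * φ x + (T - s)))
      (ε * (Real.exp (c * (T - s)) * -c * φ x - 1)) S s :=
    (((hE.mul_const (φ x)).add ((hasDerivWithinAt_id s S).const_sub T)).const_mul ε).congr_deriv
      (by ring)
  exact (((hA.mul (h₁.fun_sub h₂)).sub hB).sub hP).congr_deriv (by ring)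

lemma continuousOn_penalizedIncrement {S : Set ℝ}
    (hu : ContinuousOn (fun p : ℝ × (Fin d → ℝ) => u p.1 p.2) (S ×ˢ univ)) (hφ : Continuous φ) :
    ContinuousOn (penalizedIncrement u h L₀ T a b ε c φ) (S ×ˢ univ) := by
  have hu' : ContinuousOn (fun p : ℝ × (Fin d → ℝ) => u p.1 (p.2 + h)) (S ×ˢ univ) :=
    hu.comp (f := fun p : ℝ × (Fin d → ℝ) => (p.1, p.2 + h)) (by fun_prop)
      fun _ hp => ⟨hp.1, mem_univ _⟩
  unfold penalizedIncrement
  apply_rules [ContinuousOn.sub, ContinuousOn.mul, ContinuousOn.add, continuousOn_const,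
    Continuous.continuousOn]
  all_goals fun_prop

lemma penalizedIncrement_nonpos_of_sub_le (hs : s ≤ T)
    (hw : u s (x + h) - u s x ≤ ε * φ x) (hL₀ : 0 ≤ L₀) (ha : 0 ≤ a) (hb : 0 ≤ b) (hc : 0 ≤ c)
    (hε : 0 ≤ ε) (hφx : 0 ≤ φ x) :
    penalizedIncrement u h L₀ T a b ε c φ (s, x) ≤ 0 := by
  have hA : Real.exp (L₀ * (s - T)) ≤ 1 :=
    Real.exp_le_one_iff.2 (mul_nonpos_of_nonneg_of_nonpos hL₀ (by linarith))
  have hE : 1 ≤ Real.exp (c * (T - s)) := Real.one_le_exp (mul_nonneg hc (by linarith))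
  have hAw : Real.exp (L₀ * (s - T)) * (u s (x + h) - u s x) ≤ ε * φ x := by
    rcases le_total (u s (x + h) - u s x) 0 with hneg | hpos
    · exact (mul_nonpos_of_nonneg_of_nonpos (Real.exp_pos _).le hneg).trans (by positivity)
    · exact (mul_le_of_le_one_left hpos hA).trans hw
  simp only [penalizedIncrement]
  nlinarith [mul_nonneg hε (mul_nonneg (sub_nonneg.2 hE) hφx), mul_nonneg (sub_nonneg.2 hs) hb,
    mul_nonneg hε (sub_nonneg.2 hs)]

lemma penalizedIncrement_terminal_nonpos (hterm : ∀ x, u T x = g x)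
    (hgLip : ∀ x 𝔵 : Fin d → ℝ, |g x - g 𝔵| ≤ ∑ i, K i * |x i - 𝔵 i|)
    (hε : 0 ≤ ε) (hφx : 0 ≤ φ x) :
    penalizedIncrement u h L₀ T (∑ j, K j * |h j|) b ε c φ (T, x) ≤ 0 := by
  have hg := (le_abs_self _).trans (hgLip (x + h) x)
  simp only [Pi.add_apply, add_sub_cancel_left] at hg
  simp only [penalizedIncrement, sub_self, mul_zero, Real.exp_zero, one_mul, zero_mul, add_zero,
    hterm]
  linarith [mul_nonneg hε hφx]

theorem penalizedIncrement_nonpos_of_isMaxOn (hs : s ∈ Ico 0 T)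
    (hmax : IsMaxOn (penalizedIncrement u h L₀ T a (∑ j, 𝔏 j * |h j|) ε
      (κ * (d / 2 + ∑ j, L j)) φ) (Icc 0 T ×ˢ univ) (s, x))
    (hus : ContDiff ℝ 2 (u s))
    (hfLip : ∀ x 𝔵 z 𝔷 : Fin d → ℝ, ∀ y 𝔶 : ℝ, |f s x y z - f s 𝔵 𝔶 𝔷|
      ≤ L₀ * |y - 𝔶| + ∑ j : Fin d, (L j * |z j - 𝔷 j| + 𝔏 j * |x j - 𝔵 j|))
    (hPDE : ∀ x, HasDerivWithinAt (fun s => u s x)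
      (-(1 / 2 * laplacian d (u s) x + f s x (u s x) (fun i => pderiv d (u s) x i))) (Icc 0 T) s)
    (hφ : ContDiff ℝ 2 φ) (hφx : 0 ≤ φ x) (hφ₁ : ∀ i, |pderiv d φ x i| ≤ κ * φ x)
    (hφ₂ : ∀ i, pderiv d (fun y => pderiv d φ y i) x i ≤ κ * φ x)
    (hL₀ : 0 ≤ L₀) (hL : ∀ j, 0 ≤ L j) (h𝔏 : ∀ j, 0 ≤ 𝔏 j) (ha : 0 ≤ a) (hε : 0 < ε) :
    penalizedIncrement u h L₀ T a (∑ j, 𝔏 j * |h j|) ε (κ * (d / 2 + ∑ j, L j)) φ (s, x) ≤ 0 := by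
  by_contra! hpos
  have hD := (hasDerivWithinAt_penalizedIncrement (hPDE (x + h)) (hPDE x)).nonpos_of_isMaxOn_Icc
    (fun s' hs' => isMaxOn_iff.1 hmax (s', x) ⟨hs', mem_univ x⟩) hs
  have hf := hfLip (x + h) x (fun i => pderiv d (u s) (x + h) i) (fun i => pderiv d (u s) x i)
    (u s (x + h)) (u s x)
  simp only [penalizedIncrement] at hpos
  simp only [Pi.add_apply, add_sub_cancel_left, Finset.sum_add_distrib] at hf
  set b := ∑ j, 𝔏 j * |h j|
  set c := κ * (d / 2 + ∑ j, L j)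
  set A := Real.exp (L₀ * (s - T))
  set E := Real.exp (c * (T - s))
  set w := u s (x + h) - u s x
  have hA : 0 < A := Real.exp_pos _
  have hA1 : A ≤ 1 :=
    Real.exp_le_one_iff.2 (mul_nonpos_of_nonneg_of_nonpos hL₀ (by linarith [hs.2]))
  have hE : 0 < E := Real.exp_pos _
  have hb : 0 ≤ b := Finset.sum_nonneg fun j _ => mul_nonneg (h𝔏 j) (abs_nonneg _)
  have hTs : 0 ≤ T - s := by linarith [hs.2]
  have hw : 0 < w := by
    have : 0 < A * w := by
      nlinarith [mul_nonneg hTs hb, mul_nonneg hε.le (add_nonneg (mul_nonneg hE.le hφx) hTs)]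
    exact pos_of_mul_pos_right this hA.le
  rw [abs_of_pos hw] at hf
  have hloc : IsLocalMax (fun y => A * (u s (y + h) - u s y) - (ε * E) * φ y) x :=
    Eventually.of_forall fun y => by
      have := isMaxOn_iff.1 hmax (s, y) ⟨⟨hs.1, hs.2.le⟩, mem_univ y⟩
      simp only [penalizedIncrement] at this
      linarith
  obtain ⟨hgrad, hlap⟩ := hloc.pderiv_eq_and_laplacian_le hus hφ
  have hgradL : A * ∑ j, L j * |pderiv d (u s) (x + h) j - pderiv d (u s) x j|
      ≤ (∑ j, L j) * (ε * E * (κ * φ x)) := by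
    rw [Finset.mul_sum, Finset.sum_mul]
    refine Finset.sum_le_sum fun j _ => ?_
    calc A * (L j * |pderiv d (u s) (x + h) j - pderiv d (u s) x j|)
        = L j * (ε * E * |pderiv d φ x j|) := by
          rw [← abs_of_pos hA, mul_left_comm, ← abs_mul, hgrad j, abs_mul,
            abs_of_pos (by positivity : 0 < ε * E)]
      _ ≤ L j * (ε * E * (κ * φ x)) := by gcongr; exacts [hL j, hφ₁ j]
  have hlapφ : laplacian d φ x ≤ d * (κ * φ x) :=
    calc laplacian d φ x ≤ ∑ _i : Fin d, κ * φ x := Finset.sum_le_sum fun i _ => hφ₂ i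
      _ = d * (κ * φ x) := by simp
  have hlap' := hlap.trans (mul_le_mul_of_nonneg_left hlapφ (by positivity : 0 ≤ ε * E))
  have hAf := mul_le_mul_of_nonneg_left ((le_abs_self _).trans hf) hA.le
  have hAb : A * b ≤ b := mul_le_of_le_one_left hb hA1
  have hc : ε * (c * E * φ x) = ε * E * (d * (κ * φ x)) / 2 + (∑ j, L j) * (ε * E * (κ * φ x)) := by
    simp only [c]; ring
  linarith

end PenalizedIncrement

section Comparison

variable {d : ℕ} {u : ℝ → (Fin d → ℝ) → ℝ} {L₀ T κ : ℝ} {φ : (Fin d → ℝ) → ℝ}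
  {f : ℝ → (Fin d → ℝ) → ℝ → (Fin d → ℝ) → ℝ} {g : (Fin d → ℝ) → ℝ} {L 𝔏 K : Fin d → ℝ}

theorem sub_le_exp_mul_sum_of_barrier
    (hucont : ContinuousOn (fun p : ℝ × (Fin d → ℝ) => u p.1 p.2) (Icc 0 T ×ˢ univ))
    (hux : ∀ t ∈ Icc (0 : ℝ) T, ContDiff ℝ 2 (u t))
    (hfLip : ∀ t ∈ Icc (0 : ℝ) T, ∀ x 𝔵 z 𝔷 : Fin d → ℝ, ∀ y 𝔶 : ℝ,
      |f t x y z - f t 𝔵 𝔶 𝔷|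
        ≤ L₀ * |y - 𝔶| + ∑ j : Fin d, (L j * |z j - 𝔷 j| + 𝔏 j * |x j - 𝔵 j|))
    (hgLip : ∀ x 𝔵 : Fin d → ℝ, |g x - g 𝔵| ≤ ∑ i : Fin d, K i * |x i - 𝔵 i|)
    (hterm : ∀ x, u T x = g x)
    (hPDE : ∀ t ∈ Icc (0 : ℝ) T, ∀ x, HasDerivWithinAt (fun s => u s x)
      (-(1 / 2 * laplacian d (u t) x
          + f t x (u t x) (fun i => pderiv d (u t) x i))) (Icc 0 T) t)
    (hL₀ : 0 ≤ L₀) (hL : ∀ j, 0 ≤ L j) (h𝔏 : ∀ j, 0 ≤ 𝔏 j) (hK : ∀ j, 0 ≤ K j)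
    (hφ : ContDiff ℝ 2 φ) (hφ₀ : ∀ y, 0 ≤ φ y) (hκ : 0 ≤ κ)
    (hφ₁ : ∀ y i, |pderiv d φ y i| ≤ κ * φ y)
    (hφ₂ : ∀ y i, pderiv d (fun y => pderiv d φ y i) y i ≤ κ * φ y)
    (h : Fin d → ℝ)
    (hdom : ∀ ε > 0, ∃ R, ∀ t ∈ Icc (0 : ℝ) T, ∀ y, R < ‖y‖ → u t (y + h) - u t y ≤ ε * φ y)
    {t : ℝ} (ht : t ∈ Icc 0 T) (x : Fin d → ℝ) :
    u t (x + h) - u t x ≤ Real.exp (L₀ * (T - t)) * ∑ j, (K j + (T - t) * 𝔏 j) * |h j| := by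
  set a := ∑ j, K j * |h j|
  set b := ∑ j, 𝔏 j * |h j|
  set c := κ * (d / 2 + ∑ j, L j)
  have ha : 0 ≤ a := Finset.sum_nonneg fun j _ => mul_nonneg (hK j) (abs_nonneg _)
  have hb : 0 ≤ b := Finset.sum_nonneg fun j _ => mul_nonneg (h𝔏 j) (abs_nonneg _)
  have hc : 0 ≤ c := mul_nonneg hκ (add_nonneg (by positivity) (Finset.sum_nonneg fun j _ => hL j))
  have hΦ : ∀ ε > 0, penalizedIncrement u h L₀ T a b ε c φ (t, x) ≤ 0 := by
    intro ε hε
    by_contra! hpos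
    obtain ⟨R, hR⟩ := hdom ε hε
    obtain ⟨⟨s, y⟩, ⟨hs, -⟩, hmax⟩ := isCompact_Icc.exists_isMaxOn_prod_of_nonpos
      (continuousOn_penalizedIncrement hucont hφ.continuous)
      (fun s hs y hy => penalizedIncrement_nonpos_of_sub_le hs.2 (hR s hs y hy) hL₀ ha hb hc
        hε.le (hφ₀ y)) (mk_mem_prod ht (mem_univ x)) hpos
    have hmax_nonpos : penalizedIncrement u h L₀ T a b ε c φ (s, y) ≤ 0 := by
      rcases hs.2.lt_or_eq with hsT | rfl
      · exact penalizedIncrement_nonpos_of_isMaxOn ⟨hs.1, hsT⟩ hmax (hux s hs) (hfLip s hs)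
          (hPDE s hs) hφ (hφ₀ y) (hφ₁ y) (hφ₂ y) hL₀ hL h𝔏 ha hε
      · exact penalizedIncrement_terminal_nonpos hterm hgLip hε.le (hφ₀ y)
    linarith [isMaxOn_iff.1 hmax (t, x) ⟨ht, mem_univ x⟩]
  have hweighted : Real.exp (L₀ * (t - T)) * (u t (x + h) - u t x) ≤ a + (T - t) * b :=
    le_of_forall_pos_le_add_mul (c := Real.exp (c * (T - t)) * φ x + (T - t)) fun ε hε => by
      have := hΦ ε hε
      simp only [penalizedIncrement] at this
      linarith
  have hsum : ∑ j, (K j + (T - t) * 𝔏 j) * |h j| = a + (T - t) * b := by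
    simp only [a, b, Finset.mul_sum, ← Finset.sum_add_distrib]
    exact Finset.sum_congr rfl fun j _ => by ring
  have := mul_le_mul_of_nonneg_left hweighted (Real.exp_pos (L₀ * (T - t))).le
  rwa [← mul_assoc, ← Real.exp_add, show L₀ * (T - t) + L₀ * (t - T) = 0 by ring, Real.exp_zero,
    one_mul, ← hsum] at this

end Comparison

theorem stmt17_general (T : ℝ) (hT : 0 < T) (d : ℕ)
    (η L₀ : ℝ) (L 𝔏 K : Fin d → ℝ)
    (f : ℝ → (Fin d → ℝ) → ℝ → (Fin d → ℝ) → ℝ)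
    (g : (Fin d → ℝ) → ℝ)
    (u : ℝ → (Fin d → ℝ) → ℝ)
    (hucont : ContinuousOn (fun p : ℝ × (Fin d → ℝ) => u p.1 p.2) (Set.Icc 0 T ×ˢ Set.univ))
    (hux : ∀ t ∈ Set.Icc (0 : ℝ) T, ContDiff ℝ 2 (u t))
    (hfLip : ∀ t ∈ Set.Icc (0 : ℝ) T, ∀ x 𝔵 z 𝔷 : Fin d → ℝ, ∀ y 𝔶 : ℝ,
      |f t x y z - f t 𝔵 𝔶 𝔷|
        ≤ L₀ * |y - 𝔶| + ∑ j : Fin d, (L j * |z j - 𝔷 j| + 𝔏 j * |x j - 𝔵 j|))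
    (hgLip : ∀ x 𝔵 : Fin d → ℝ, |g x - g 𝔵| ≤ ∑ i : Fin d, K i * |x i - 𝔵 i|)
    (hugrowth : ∀ t ∈ Set.Icc (0 : ℝ) T, ∀ x,
      |u t x| ≤ η * (1 + ∑ i : Fin d, |x i|) ^ η)
    (hterm : ∀ x, u T x = g x)
    (hPDE : ∀ t ∈ Set.Icc (0 : ℝ) T, ∀ x, HasDerivWithinAt (fun s => u s x)
      (-(1 / 2 * laplacian d (u t) x
          + f t x (u t x) (fun i => pderiv d (u t) x i))) (Set.Icc 0 T) t) :
    (∀ t ∈ Set.Icc (0 : ℝ) T, ∀ x 𝔵 : Fin d → ℝ,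
      |u t x - u t 𝔵|
        ≤ Real.exp (L₀ * (T - t)) * ∑ j : Fin d, (K j + (T - t) * 𝔏 j) * |x j - 𝔵 j|)
    ∧ (∀ t ∈ Set.Ioo (0 : ℝ) T, ∀ x : Fin d → ℝ, ∀ i : Fin d,
      |pderiv d (u t) x i| ≤ Real.exp (L₀ * (T - t)) * (K i + (T - t) * 𝔏 i)) := by
  have hTT : T ∈ Icc 0 T := ⟨hT.le, le_rfl⟩
  have hL₀ : 0 ≤ L₀ := by simpa using (abs_nonneg _).trans (hfLip T hTT 0 0 0 0 1 0)
  have hL := nonneg_of_abs_sub_le_sum_mul_abs fun z 𝔷 => by simpa using hfLip T hTT 0 0 z 𝔷 0 0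
  have h𝔏 := nonneg_of_abs_sub_le_sum_mul_abs fun x 𝔵 => by simpa using hfLip T hTT x 𝔵 0 0 0 0
  have hinc : ∀ h, ∀ t ∈ Icc 0 T, ∀ x, u t (x + h) - u t x
      ≤ Real.exp (L₀ * (T - t)) * ∑ j, (K j + (T - t) * 𝔏 j) * |h j| := fun h t ht x =>
    sub_le_exp_mul_sum_of_barrier hucont hux hfLip hgLip hterm hPDE hL₀ hL h𝔏
      (nonneg_of_abs_sub_le_sum_mul_abs hgLip) (contDiff_penalty _) (penalty_nonneg _)
      (by positivity) (abs_pderiv_penalty_le _) (pderiv_pderiv_penalty_le _) h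
      (fun ε hε => exists_sub_le_penalty_of_growth hugrowth h hε) ht x
  have hLip : ∀ t ∈ Icc (0 : ℝ) T, ∀ x 𝔵 : Fin d → ℝ, |u t x - u t 𝔵|
      ≤ Real.exp (L₀ * (T - t)) * ∑ j, (K j + (T - t) * 𝔏 j) * |x j - 𝔵 j| := by
    intro t ht x 𝔵
    rw [abs_sub_le_iff]
    constructor
    · simpa using hinc (x - 𝔵) t ht 𝔵
    · simpa [abs_sub_comm] using hinc (𝔵 - x) t ht x
  refine ⟨hLip, fun t ht x i => abs_pderiv_le_of_abs_sub_le
    ((hux t ⟨ht.1.le, ht.2.le⟩).differentiable (by norm_num)) fun τ => ?_⟩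
  have := hLip t ⟨ht.1.le, ht.2.le⟩ (x + τ • Pi.single i 1) x
  rwa [sum_mul_abs_add_smul_single_sub, ← mul_assoc] at this

/-- Items (iii) and (iv) of Lemma 4.2: under the stated Lipschitz, growth, terminal-value and
PDE assumptions on `u ∈ C^{1,2}([0,T]×ℝ^d,ℝ)`, one has
(a) `|u(t,x) − u(t,𝔵)| ≤ e^{L₀(T−t)} Σ_j (K_j + (T−t)𝔏_j)|x_j − 𝔵_j|` for all `t ∈ [0,T]`, and
(b) `|(∂/∂x_i)u(t,x)| ≤ e^{L₀(T−t)}(K_i + (T−t)𝔏_i)` for all `t ∈ (0,T)`. -/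
theorem stmt17 (T : ℝ) (hT : 0 < T) (d : ℕ) (hd : 0 < d)
    (η L₀ : ℝ) (L 𝔏 K : Fin d → ℝ)
    (f : ℝ → (Fin d → ℝ) → ℝ → (Fin d → ℝ) → ℝ)
    (hfcont : ContinuousOn
      (fun p : ℝ × (Fin d → ℝ) × ℝ × (Fin d → ℝ) => f p.1 p.2.1 p.2.2.1 p.2.2.2)
      (Set.Icc 0 T ×ˢ Set.univ))
    (g : (Fin d → ℝ) → ℝ) (hgcont : Continuous g)
    (u : ℝ → (Fin d → ℝ) → ℝ)
    (hucont : ContinuousOn (fun p : ℝ × (Fin d → ℝ) => u p.1 p.2) (Set.Icc 0 T ×ˢ Set.univ))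
    (hux : ∀ t ∈ Set.Icc (0 : ℝ) T, ContDiff ℝ 2 (u t))
    (hfLip : ∀ t ∈ Set.Icc (0 : ℝ) T, ∀ x 𝔵 z 𝔷 : Fin d → ℝ, ∀ y 𝔶 : ℝ,
      |f t x y z - f t 𝔵 𝔶 𝔷|
        ≤ L₀ * |y - 𝔶| + ∑ j : Fin d, (L j * |z j - 𝔷 j| + 𝔏 j * |x j - 𝔵 j|))
    (hgLip : ∀ x 𝔵 : Fin d → ℝ, |g x - g 𝔵| ≤ ∑ i : Fin d, K i * |x i - 𝔵 i|)
    (hugrowth : ∀ t ∈ Set.Icc (0 : ℝ) T, ∀ x,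
      |u t x| ≤ η * (1 + ∑ i : Fin d, |x i|) ^ η)
    (hterm : ∀ x, u T x = g x)
    (hPDE : ∀ t ∈ Set.Icc (0 : ℝ) T, ∀ x, HasDerivWithinAt (fun s => u s x)
      (-(1 / 2 * laplacian d (u t) x
          + f t x (u t x) (fun i => pderiv d (u t) x i))) (Set.Icc 0 T) t) :
    (∀ t ∈ Set.Icc (0 : ℝ) T, ∀ x 𝔵 : Fin d → ℝ,
      |u t x - u t 𝔵|
        ≤ Real.exp (L₀ * (T - t)) * ∑ j : Fin d, (K j + (T - t) * 𝔏 j) * |x j - 𝔵 j|)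
    ∧ (∀ t ∈ Set.Ioo (0 : ℝ) T, ∀ x : Fin d → ℝ, ∀ i : Fin d,
      |pderiv d (u t) x i| ≤ Real.exp (L₀ * (T - t)) * (K i + (T - t) * 𝔏 i)) :=
  stmt17_general T hT d η L₀ L 𝔏 K f g u hucont hux hfLip hgLip hugrowth hterm hPDE
end
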